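/- Let X₁ⁿ, X₂ⁿ be random variables on finite alphabets and suppose there exist random variables Z₁ ∈ [2^{nC₁}] and Z₂ ∈ [2^{nC₂}], each a deterministic function of a pair (W₁, W₂) of independent uniform messages, such that X₁ⁿ is a deterministic function of (W₁, Z₁) and X₂ⁿ is a deterministic function of (W₂, Z₂). Then I(X₁ⁿ; X₂ⁿ) ≤ n(C₁ + C₂). -/
import Mathlib


open scoped BigOperators Classical

/-- Probability that the random variable `A` takes the value `a`, under the pmf `p`
on a finite sample space `Ω`. -/
noncomputable def prOf {Ω α : Type*} [Fintype Ω] (p : Ω → ℝ) (A : Ω → α) (a : α) : ℝ :=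
  ∑ ω, if A ω = a then p ω else 0

/-- `p` is a probability mass function on the finite type `Ω`. -/
def IsPmf {Ω : Type*} [Fintype Ω] (p : Ω → ℝ) : Prop :=
  (∀ ω, 0 ≤ p ω) ∧ ∑ ω, p ω = 1

/-- Mutual information `I(A;B)` (base-2 logarithm) of random variables `A, B`
on a finite probability space `(Ω, p)`. -/
noncomputable def mutualInfo {Ω α β : Type*} [Fintype Ω] [Fintype α] [Fintype β]
    (p : Ω → ℝ) (A : Ω → α) (B : Ω → β) : ℝ :=
  ∑ a, ∑ b, prOf p (fun ω => (A ω, B ω)) (a, b) *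
    Real.logb 2 (prOf p (fun ω => (A ω, B ω)) (a, b) / (prOf p A a * prOf p B b))

/-- Conditional mutual information `I(A;B|C)` (base-2 logarithm). -/
noncomputable def condMutualInfo {Ω α β γ : Type*} [Fintype Ω] [Fintype α] [Fintype β]
    [Fintype γ] (p : Ω → ℝ) (A : Ω → α) (B : Ω → β) (C : Ω → γ) : ℝ :=
  ∑ a, ∑ b, ∑ c, prOf p (fun ω => (A ω, B ω, C ω)) (a, b, c) *
    Real.logb 2 (prOf p (fun ω => (A ω, B ω, C ω)) (a, b, c) * prOf p C c /
      (prOf p (fun ω => (A ω, C ω)) (a, c) * prOf p (fun ω => (B ω, C ω)) (b, c)))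


section Helpers

/-- Log-sum inequality. -/
lemma my_logsum {ι : Type*} (s : Finset ι) (a b : ι → ℝ)
    (ha : ∀ i ∈ s, 0 ≤ a i) (hb : ∀ i ∈ s, 0 ≤ b i)
    (hab : ∀ i ∈ s, b i = 0 → a i = 0) :
    (∑ i ∈ s, a i) * Real.log ((∑ i ∈ s, a i) / (∑ i ∈ s, b i)) ≤
      ∑ i ∈ s, a i * Real.log (a i / b i) := by
  set A := ∑ i ∈ s, a i with hA
  set B := ∑ i ∈ s, b i with hB
  have hA0 : 0 ≤ A := Finset.sum_nonneg ha
  rcases eq_or_lt_of_le hA0 with h0 | hApos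
  · have hz : ∀ i ∈ s, a i = 0 := (Finset.sum_eq_zero_iff_of_nonneg ha).1 h0.symm
    have : ∑ i ∈ s, a i * Real.log (a i / b i) = 0 :=
      Finset.sum_eq_zero fun i hi => by rw [hz i hi, zero_mul]
    rw [this, ← h0, zero_mul]
  · have hB0 : 0 ≤ B := Finset.sum_nonneg hb
    have hBpos : 0 < B := by
      rcases eq_or_lt_of_le hB0 with h0 | h
      · exfalso
        have hbz : ∀ i ∈ s, b i = 0 := (Finset.sum_eq_zero_iff_of_nonneg hb).1 h0.symm
        have : A = 0 := Finset.sum_eq_zero fun i hi => hab i hi (hbz i hi)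
        linarith
      · exact h
    have key : ∀ i ∈ s,
        a i * Real.log (A / B) ≤ a i * Real.log (a i / b i) + (b i * (A / B) - a i) := by
      intro i hi
      rcases eq_or_lt_of_le (ha i hi) with h0 | hai
      · rw [← h0]
        have : 0 ≤ b i * (A / B) := mul_nonneg (hb i hi) (div_nonneg hApos.le hB0)
        simpa using this
      · have hbi : 0 < b i := by
          rcases eq_or_lt_of_le (hb i hi) with h0 | h
          · exfalso; have := hab i hi h0.symm; linarith
          · exact h
        have hx : (0:ℝ) < A * b i / (B * a i) := div_pos (mul_pos hApos hbi) (mul_pos hBpos hai)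
        have hlog := Real.log_le_sub_one_of_pos hx
        have hlogeq : Real.log (A * b i / (B * a i)) =
            Real.log (A / B) - Real.log (a i / b i) := by
          rw [Real.log_div (mul_pos hApos hbi).ne'
              (mul_pos hBpos hai).ne',
            Real.log_mul hApos.ne' hbi.ne', Real.log_mul hBpos.ne' hai.ne',
            Real.log_div hApos.ne' hBpos.ne', Real.log_div hai.ne' hbi.ne']
          ring
        rw [hlogeq] at hlog
        have h2 := mul_le_mul_of_nonneg_left hlog hai.le
        have h3 : a i * (A * b i / (B * a i)) = b i * (A / B) := by
          field_simp
        nlinarith [h2, h3]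
    calc A * Real.log (A / B) = ∑ i ∈ s, a i * Real.log (A / B) := by
          rw [← Finset.sum_mul]
      _ ≤ ∑ i ∈ s, (a i * Real.log (a i / b i) + (b i * (A / B) - a i)) :=
          Finset.sum_le_sum key
      _ = (∑ i ∈ s, a i * Real.log (a i / b i)) + (B * (A / B) - A) := by
          rw [Finset.sum_add_distrib, Finset.sum_sub_distrib, ← Finset.sum_mul]
      _ = ∑ i ∈ s, a i * Real.log (a i / b i) := by
          rw [mul_div_cancel₀ _ hBpos.ne']; ring

lemma my_logsum_b {ι : Type*} (s : Finset ι) (a b : ι → ℝ)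
    (ha : ∀ i ∈ s, 0 ≤ a i) (hb : ∀ i ∈ s, 0 ≤ b i)
    (hab : ∀ i ∈ s, b i = 0 → a i = 0) :
    (∑ i ∈ s, a i) * Real.logb 2 ((∑ i ∈ s, a i) / (∑ i ∈ s, b i)) ≤
      ∑ i ∈ s, a i * Real.logb 2 (a i / b i) := by
  have h := my_logsum s a b ha hb hab
  have h2 : (0:ℝ) < Real.log 2 := Real.log_pos one_lt_two
  simp only [Real.logb, mul_div_assoc'] at *
  rw [← Finset.sum_div]
  exact div_le_div_of_nonneg_right h h2.le

/-- Entropy is at most log of the cardinality. -/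
lemma my_entropy_le {ι : Type*} [Fintype ι] (p : ι → ℝ) (hp : ∀ i, 0 ≤ p i)
    (hsum : ∑ i, p i = 1) :
    ∑ i, p i * Real.logb 2 (p i)⁻¹ ≤ Real.logb 2 (Fintype.card ι) := by
  have h := my_logsum_b Finset.univ p (fun _ => (1:ℝ)) (fun i _ => hp i)
    (fun i _ => zero_le_one) (fun i _ h => absurd h one_ne_zero)
  simp only [Finset.sum_const, Finset.card_univ, nsmul_eq_mul, mul_one, hsum, one_mul,
    div_one] at h
  have h1 : Real.logb 2 ((Fintype.card ι : ℝ))⁻¹ ≤ ∑ i, p i * Real.logb 2 (p i) := by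
    simpa [one_div] using h
  have h2 : ∀ i, p i * Real.logb 2 (p i)⁻¹ = -(p i * Real.logb 2 (p i)) := by
    intro i; rw [Real.logb, Real.log_inv]; simp [Real.logb]; ring
  rw [Finset.sum_congr rfl fun i _ => h2 i, Finset.sum_neg_distrib]
  rw [Real.logb, Real.log_inv] at h1
  simp only [Real.logb] at *
  rw [neg_div] at h1
  linarith

lemma prOf_nonneg {Ω α : Type*} [Fintype Ω] (p : Ω → ℝ) (hp : ∀ ω, 0 ≤ p ω)
    (A : Ω → α) (a : α) : 0 ≤ prOf p A a := by
  unfold prOf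
  refine Finset.sum_nonneg fun ω _ => ?_
  split <;> [exact hp ω; exact le_refl 0]

lemma prOf_comp {Ω α β : Type*} [Fintype Ω] [Fintype α] (p : Ω → ℝ) (A : Ω → α)
    (g : α → β) (x : β) :
    ∑ a ∈ Finset.univ.filter (fun a => g a = x), prOf p A a
      = prOf p (fun ω => g (A ω)) x := by
  unfold prOf
  rw [Finset.sum_comm]
  refine Finset.sum_congr rfl fun ω _ => ?_
  rw [Finset.sum_ite_eq]
  simp

lemma prOf_pair_le_left {Ω α β : Type*} [Fintype Ω] (p : Ω → ℝ) (hp : ∀ ω, 0 ≤ p ω)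
    (A : Ω → α) (B : Ω → β) (a : α) (b : β) :
    prOf p (fun ω => (A ω, B ω)) (a, b) ≤ prOf p A a := by
  refine Finset.sum_le_sum fun ω _ => ?_
  dsimp only
  by_cases h : (A ω, B ω) = (a, b)
  · rw [if_pos h, if_pos (congrArg Prod.fst h)]
  · rw [if_neg h]
    split <;> [exact hp ω; exact le_refl 0]

lemma prOf_pair_le_right {Ω α β : Type*} [Fintype Ω] (p : Ω → ℝ) (hp : ∀ ω, 0 ≤ p ω)
    (A : Ω → α) (B : Ω → β) (a : α) (b : β) :
    prOf p (fun ω => (A ω, B ω)) (a, b) ≤ prOf p B b := by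
  refine Finset.sum_le_sum fun ω _ => ?_
  dsimp only
  by_cases h : (A ω, B ω) = (a, b)
  · rw [if_pos h, if_pos (congrArg Prod.snd h)]
  · rw [if_neg h]
    split <;> [exact hp ω; exact le_refl 0]

/-- Data processing inequality for deterministic functions. -/
lemma my_dpi {Ω α β α' β' : Type*} [Fintype Ω] [Fintype α] [Fintype β] [Fintype α']
    [Fintype β'] (p : Ω → ℝ) (hp : ∀ ω, 0 ≤ p ω) (A : Ω → α) (B : Ω → β)
    (g : α → α') (h : β → β') :
    mutualInfo p (fun ω => g (A ω)) (fun ω => h (B ω)) ≤ mutualInfo p A B := by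
  unfold mutualInfo
  beta_reduce
  rw [← Fintype.sum_prod_type', ← Fintype.sum_prod_type',
    ← Finset.sum_fiberwise Finset.univ (fun (ab : α × β) => (g ab.1, h ab.2))]
  refine Finset.sum_le_sum fun xy _ => ?_
  obtain ⟨x, y⟩ := xy
  have hfib : Finset.univ.filter (fun (ab : α × β) => (g ab.1, h ab.2) = (x, y))
      = Finset.univ.filter (fun a => g a = x) ×ˢ Finset.univ.filter (fun b => h b = y) := by
    ext ⟨a, b⟩
    simp [Prod.ext_iff]
  have hsum1 : ∑ ab ∈ Finset.univ.filter (fun (ab : α × β) => (g ab.1, h ab.2) = (x, y)),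
      prOf p (fun ω => (A ω, B ω)) ab
      = prOf p (fun ω => (g (A ω), h (B ω))) (x, y) := by
    have := prOf_comp p (fun ω => (A ω, B ω)) (fun ab => (g ab.1, h ab.2)) (x, y)
    simpa using this
  have hsum2 : ∑ ab ∈ Finset.univ.filter (fun (ab : α × β) => (g ab.1, h ab.2) = (x, y)),
      prOf p A ab.1 * prOf p B ab.2
      = prOf p (fun ω => g (A ω)) x * prOf p (fun ω => h (B ω)) y := by
    rw [hfib, Finset.sum_product]
    rw [← prOf_comp p A g x, ← prOf_comp p B h y, Finset.sum_mul_sum]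
  calc prOf p (fun ω => (g (A ω), h (B ω))) (x, y) *
        Real.logb 2 (prOf p (fun ω => (g (A ω), h (B ω))) (x, y) /
          (prOf p (fun ω => g (A ω)) x * prOf p (fun ω => h (B ω)) y))
      = (∑ ab ∈ Finset.univ.filter (fun (ab : α × β) => (g ab.1, h ab.2) = (x, y)),
          prOf p (fun ω => (A ω, B ω)) ab) *
        Real.logb 2 ((∑ ab ∈ Finset.univ.filter (fun (ab : α × β) => (g ab.1, h ab.2) = (x, y)),
          prOf p (fun ω => (A ω, B ω)) ab) /
          (∑ ab ∈ Finset.univ.filter (fun (ab : α × β) => (g ab.1, h ab.2) = (x, y)),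
            prOf p A ab.1 * prOf p B ab.2)) := by rw [hsum1, hsum2]
    _ ≤ ∑ ab ∈ Finset.univ.filter (fun (ab : α × β) => (g ab.1, h ab.2) = (x, y)),
          prOf p (fun ω => (A ω, B ω)) ab *
            Real.logb 2 (prOf p (fun ω => (A ω, B ω)) ab / (prOf p A ab.1 * prOf p B ab.2)) := by
        refine my_logsum_b _ _ _ (fun i _ => prOf_nonneg p hp _ _)
          (fun i _ => mul_nonneg (prOf_nonneg p hp _ _) (prOf_nonneg p hp _ _)) ?_
        intro i _ h0
        rcases mul_eq_zero.1 h0 with h1 | h1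
        · refine le_antisymm ?_ (prOf_nonneg p hp _ _)
          calc prOf p (fun ω => (A ω, B ω)) i
              = prOf p (fun ω => (A ω, B ω)) (i.1, i.2) := by rw [Prod.mk.eta]
            _ ≤ prOf p A i.1 := prOf_pair_le_left p hp A B i.1 i.2
            _ = 0 := h1
        · refine le_antisymm ?_ (prOf_nonneg p hp _ _)
          calc prOf p (fun ω => (A ω, B ω)) i
              = prOf p (fun ω => (A ω, B ω)) (i.1, i.2) := by rw [Prod.mk.eta]
            _ ≤ prOf p B i.2 := prOf_pair_le_right p hp A B i.1 i.2
            _ = 0 := h1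
    _ = _ := by
        refine Finset.sum_congr rfl fun ab _ => ?_
        rw [Prod.mk.eta]

end Helpers

/-- If `W₁, W₂` are independent uniform messages, `Zᵢ = ψᵢ(W₁,W₂)` takes at most
`2^{nCᵢ}` values, and `Xᵢⁿ = fᵢ(Wᵢ, Zᵢ)`, then `I(X₁ⁿ;X₂ⁿ) ≤ n(C₁+C₂)`. -/
theorem mutualInfo_le_of_facilitator {𝒲₁ 𝒲₂ 𝒵₁ 𝒵₂ 𝒳₁ 𝒳₂ : Type*}
    [Fintype 𝒲₁] [Fintype 𝒲₂] [Fintype 𝒵₁] [Fintype 𝒵₂] [Fintype 𝒳₁] [Fintype 𝒳₂]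
    [Nonempty 𝒲₁] [Nonempty 𝒲₂]
    (n : ℕ) (C₁ C₂ : ℝ) (hC₁ : 0 ≤ C₁) (hC₂ : 0 ≤ C₂)
    (hZ₁ : (Fintype.card 𝒵₁ : ℝ) ≤ 2 ^ ((n : ℝ) * C₁))
    (hZ₂ : (Fintype.card 𝒵₂ : ℝ) ≤ 2 ^ ((n : ℝ) * C₂))
    (ψ₁ : 𝒲₁ × 𝒲₂ → 𝒵₁) (ψ₂ : 𝒲₁ × 𝒲₂ → 𝒵₂)
    (f₁ : 𝒲₁ × 𝒵₁ → 𝒳₁) (f₂ : 𝒲₂ × 𝒵₂ → 𝒳₂) :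
    mutualInfo (fun _ : 𝒲₁ × 𝒲₂ => ((Fintype.card 𝒲₁ : ℝ) * (Fintype.card 𝒲₂ : ℝ))⁻¹)
      (fun w => f₁ (w.1, ψ₁ w)) (fun w => f₂ (w.2, ψ₂ w)) ≤ n * (C₁ + C₂) := by
  classical
  have hN₁ : (0:ℝ) < (Fintype.card 𝒲₁ : ℝ) := by exact_mod_cast Fintype.card_pos
  have hN₂ : (0:ℝ) < (Fintype.card 𝒲₂ : ℝ) := by exact_mod_cast Fintype.card_pos
  set N₁ : ℝ := (Fintype.card 𝒲₁ : ℝ) with hN₁def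
  set N₂ : ℝ := (Fintype.card 𝒲₂ : ℝ) with hN₂def
  set c : ℝ := (N₁ * N₂)⁻¹ with hc_def
  have hc : 0 < c := by positivity
  set p : 𝒲₁ × 𝒲₂ → ℝ := fun _ => c with hp_def
  have hp : ∀ ω, 0 ≤ p ω := fun _ => hc.le
  have hdpi := my_dpi p hp (fun w : 𝒲₁ × 𝒲₂ => (w.1, ψ₁ w))
    (fun w : 𝒲₁ × 𝒲₂ => (w.2, ψ₂ w)) f₁ f₂
  refine le_trans hdpi ?_
  -- counts
  set k₁ : 𝒲₁ → 𝒵₁ → ℕ :=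
    fun w1 z => (Finset.univ.filter (fun w2 => ψ₁ (w1, w2) = z)).card with hk₁def
  set k₂ : 𝒲₂ → 𝒵₂ → ℕ :=
    fun w2 z => (Finset.univ.filter (fun w1 => ψ₂ (w1, w2) = z)).card with hk₂def
  have hk₁pos : ∀ w1 w2, 0 < k₁ w1 (ψ₁ (w1, w2)) := fun w1 w2 =>
    Finset.card_pos.2 ⟨w2, Finset.mem_filter.2 ⟨Finset.mem_univ _, rfl⟩⟩
  have hk₂pos : ∀ w1 w2, 0 < k₂ w2 (ψ₂ (w1, w2)) := fun w1 w2 =>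
    Finset.card_pos.2 ⟨w1, Finset.mem_filter.2 ⟨Finset.mem_univ _, rfl⟩⟩
  -- marginals
  have hQA : ∀ w1 z1, prOf p (fun w : 𝒲₁ × 𝒲₂ => (w.1, ψ₁ w)) (w1, z1)
      = c * (k₁ w1 z1 : ℝ) := by
    intro w1 z1
    unfold prOf
    rw [Fintype.sum_prod_type]
    simp only [hp_def, Prod.mk.injEq, ite_and]
    rw [Finset.sum_comm]
    simp only [Finset.sum_ite_eq', Finset.mem_univ, if_true]
    rw [← Finset.sum_filter, Finset.sum_const, nsmul_eq_mul, mul_comm, hk₁def]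
  have hQB : ∀ w2 z2, prOf p (fun w : 𝒲₁ × 𝒲₂ => (w.2, ψ₂ w)) (w2, z2)
      = c * (k₂ w2 z2 : ℝ) := by
    intro w2 z2
    unfold prOf
    rw [Fintype.sum_prod_type]
    simp only [hp_def, Prod.mk.injEq, ite_and]
    simp only [Finset.sum_ite_eq', Finset.mem_univ, if_true]
    rw [← Finset.sum_filter, Finset.sum_const, nsmul_eq_mul, mul_comm, hk₂def]
  have hQ : ∀ (w1 : 𝒲₁) (z1 : 𝒵₁) (w2 : 𝒲₂) (z2 : 𝒵₂),
      prOf p (fun w : 𝒲₁ × 𝒲₂ => ((w.1, ψ₁ w), (w.2, ψ₂ w))) ((w1, z1), (w2, z2))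
        = if ψ₁ (w1, w2) = z1 ∧ ψ₂ (w1, w2) = z2 then c else 0 := by
    intro w1 z1 w2 z2
    unfold prOf
    rw [Finset.sum_eq_single (w1, w2)]
    · simp [hp_def]
    · intro b _ hb
      rw [if_neg]
      intro hcond
      apply hb
      simp only [Prod.mk.injEq] at hcond
      exact Prod.ext hcond.1.1 hcond.2.1
    · intro h; exact absurd (Finset.mem_univ _) h
  -- exact value of I(A;B)
  have hMI : mutualInfo p (fun w : 𝒲₁ × 𝒲₂ => (w.1, ψ₁ w)) (fun w : 𝒲₁ × 𝒲₂ => (w.2, ψ₂ w))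
      = ∑ w1, ∑ w2, c * Real.logb 2 (c /
          ((c * (k₁ w1 (ψ₁ (w1, w2)) : ℝ)) * (c * (k₂ w2 (ψ₂ (w1, w2)) : ℝ)))) := by
    unfold mutualInfo
    simp only [Fintype.sum_prod_type]
    simp only [hQ, hQA, hQB]
    refine Finset.sum_congr rfl fun w1 _ => ?_
    rw [Finset.sum_comm]
    refine Finset.sum_congr rfl fun w2 _ => ?_
    simp only [ite_mul, zero_mul, ite_and]
    simp [Finset.sum_ite_eq]
  rw [hMI]
  -- split the log
  have hsplit : ∀ (w1 : 𝒲₁) (w2 : 𝒲₂),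
      c * Real.logb 2 (c / ((c * (k₁ w1 (ψ₁ (w1, w2)) : ℝ)) * (c * (k₂ w2 (ψ₂ (w1, w2)) : ℝ))))
      = c * Real.logb 2 (N₂ / (k₁ w1 (ψ₁ (w1, w2)) : ℝ))
        + c * Real.logb 2 (N₁ / (k₂ w2 (ψ₂ (w1, w2)) : ℝ)) := by
    intro w1 w2
    have h1 : (0:ℝ) < (k₁ w1 (ψ₁ (w1, w2)) : ℝ) := by exact_mod_cast hk₁pos w1 w2
    have h2 : (0:ℝ) < (k₂ w2 (ψ₂ (w1, w2)) : ℝ) := by exact_mod_cast hk₂pos w1 w2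
    have harg : c / ((c * (k₁ w1 (ψ₁ (w1, w2)) : ℝ)) * (c * (k₂ w2 (ψ₂ (w1, w2)) : ℝ)))
        = (N₂ / (k₁ w1 (ψ₁ (w1, w2)) : ℝ)) * (N₁ / (k₂ w2 (ψ₂ (w1, w2)) : ℝ)) := by
      rw [hc_def]; field_simp
    rw [harg, Real.logb_mul (by positivity) (by positivity), mul_add]
  simp only [hsplit]
  rw [Finset.sum_congr rfl fun w1 _ => Finset.sum_add_distrib, Finset.sum_add_distrib]
  -- bound each half
  have hZne₁ : Nonempty 𝒵₁ := ⟨ψ₁ (Classical.arbitrary _)⟩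
  have hZne₂ : Nonempty 𝒵₂ := ⟨ψ₂ (Classical.arbitrary _)⟩
  have hcard₁ : (0:ℝ) < (Fintype.card 𝒵₁ : ℝ) := by exact_mod_cast Fintype.card_pos
  have hcard₂ : (0:ℝ) < (Fintype.card 𝒵₂ : ℝ) := by exact_mod_cast Fintype.card_pos
  have hL₁ : Real.logb 2 (Fintype.card 𝒵₁) ≤ (n : ℝ) * C₁ := by
    calc Real.logb 2 (Fintype.card 𝒵₁) ≤ Real.logb 2 ((2:ℝ) ^ ((n:ℝ) * C₁)) :=
          Real.logb_le_logb_of_le (by norm_num) hcard₁ hZ₁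
      _ = (n:ℝ) * C₁ := Real.logb_rpow (by norm_num) (by norm_num)
  have hL₂ : Real.logb 2 (Fintype.card 𝒵₂) ≤ (n : ℝ) * C₂ := by
    calc Real.logb 2 (Fintype.card 𝒵₂) ≤ Real.logb 2 ((2:ℝ) ^ ((n:ℝ) * C₂)) :=
          Real.logb_le_logb_of_le (by norm_num) hcard₂ hZ₂
      _ = (n:ℝ) * C₂ := Real.logb_rpow (by norm_num) (by norm_num)
  have hS1 : ∑ w1, ∑ w2, c * Real.logb 2 (N₂ / (k₁ w1 (ψ₁ (w1, w2)) : ℝ))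
      ≤ (n : ℝ) * C₁ := by
    have hper : ∀ w1 : 𝒲₁, ∑ w2, c * Real.logb 2 (N₂ / (k₁ w1 (ψ₁ (w1, w2)) : ℝ))
        ≤ N₁⁻¹ * Real.logb 2 (Fintype.card 𝒵₁) := by
      intro w1
      have hfib := Finset.sum_fiberwise' Finset.univ (fun w2 => ψ₁ (w1, w2))
        (fun z => c * Real.logb 2 (N₂ / (k₁ w1 z : ℝ)))
      rw [← hfib]
      have hsumk : ∑ z : 𝒵₁, ((k₁ w1 z : ℝ) / N₂) = 1 := by
        rw [← Finset.sum_div]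
        rw [div_eq_one_iff_eq hN₂.ne']
        rw [hN₂def]
        rw [← Nat.cast_sum]
        norm_cast
        rw [hk₁def]
        exact (Finset.card_eq_sum_card_fiberwise (fun x _ => Finset.mem_univ _)).symm
      have hent := my_entropy_le (fun z => (k₁ w1 z : ℝ) / N₂)
        (fun z => by positivity) hsumk
      calc ∑ z : 𝒵₁, ∑ _w2 ∈ Finset.univ.filter (fun w2 => ψ₁ (w1, w2) = z),
              (c * Real.logb 2 (N₂ / (k₁ w1 z : ℝ)))
          = ∑ z : 𝒵₁, N₁⁻¹ * (((k₁ w1 z : ℝ) / N₂) * Real.logb 2 (((k₁ w1 z : ℝ) / N₂))⁻¹) := by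
            refine Finset.sum_congr rfl fun z _ => ?_
            rw [Finset.sum_const, nsmul_eq_mul, inv_div, hc_def, mul_inv]
            rw [div_eq_mul_inv]
            ring
        _ = N₁⁻¹ * ∑ z : 𝒵₁, ((k₁ w1 z : ℝ) / N₂) * Real.logb 2 (((k₁ w1 z : ℝ) / N₂))⁻¹ := by
            rw [Finset.mul_sum]
        _ ≤ N₁⁻¹ * Real.logb 2 (Fintype.card 𝒵₁) := by
            apply mul_le_mul_of_nonneg_left hent (by positivity)
    calc ∑ w1, ∑ w2, c * Real.logb 2 (N₂ / (k₁ w1 (ψ₁ (w1, w2)) : ℝ))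
        ≤ ∑ _w1 : 𝒲₁, N₁⁻¹ * Real.logb 2 (Fintype.card 𝒵₁) :=
          Finset.sum_le_sum fun w1 _ => hper w1
      _ = N₁ * (N₁⁻¹ * Real.logb 2 (Fintype.card 𝒵₁)) := by
          rw [Finset.sum_const, nsmul_eq_mul, Finset.card_univ, hN₁def]
      _ = Real.logb 2 (Fintype.card 𝒵₁) := by
          rw [← mul_assoc, mul_inv_cancel₀ hN₁.ne', one_mul]
      _ ≤ (n : ℝ) * C₁ := hL₁
  have hS2 : ∑ w1, ∑ w2, c * Real.logb 2 (N₁ / (k₂ w2 (ψ₂ (w1, w2)) : ℝ))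
      ≤ (n : ℝ) * C₂ := by
    rw [Finset.sum_comm]
    have hper : ∀ w2 : 𝒲₂, ∑ w1, c * Real.logb 2 (N₁ / (k₂ w2 (ψ₂ (w1, w2)) : ℝ))
        ≤ N₂⁻¹ * Real.logb 2 (Fintype.card 𝒵₂) := by
      intro w2
      have hfib := Finset.sum_fiberwise' Finset.univ (fun w1 => ψ₂ (w1, w2))
        (fun z => c * Real.logb 2 (N₁ / (k₂ w2 z : ℝ)))
      rw [← hfib]
      have hsumk : ∑ z : 𝒵₂, ((k₂ w2 z : ℝ) / N₁) = 1 := by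
        rw [← Finset.sum_div]
        rw [div_eq_one_iff_eq hN₁.ne']
        rw [hN₁def]
        rw [← Nat.cast_sum]
        norm_cast
        rw [hk₂def]
        exact (Finset.card_eq_sum_card_fiberwise (fun x _ => Finset.mem_univ _)).symm
      have hent := my_entropy_le (fun z => (k₂ w2 z : ℝ) / N₁)
        (fun z => by positivity) hsumk
      calc ∑ z : 𝒵₂, ∑ _w1 ∈ Finset.univ.filter (fun w1 => ψ₂ (w1, w2) = z),
              (c * Real.logb 2 (N₁ / (k₂ w2 z : ℝ)))
          = ∑ z : 𝒵₂, N₂⁻¹ * (((k₂ w2 z : ℝ) / N₁) * Real.logb 2 (((k₂ w2 z : ℝ) / N₁))⁻¹) := by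
            refine Finset.sum_congr rfl fun z _ => ?_
            rw [Finset.sum_const, nsmul_eq_mul, inv_div, hc_def, mul_inv]
            rw [div_eq_mul_inv]
            ring
        _ = N₂⁻¹ * ∑ z : 𝒵₂, ((k₂ w2 z : ℝ) / N₁) * Real.logb 2 (((k₂ w2 z : ℝ) / N₁))⁻¹ := by
            rw [Finset.mul_sum]
        _ ≤ N₂⁻¹ * Real.logb 2 (Fintype.card 𝒵₂) := by
            apply mul_le_mul_of_nonneg_left hent (by positivity)
    calc ∑ w2, ∑ w1, c * Real.logb 2 (N₁ / (k₂ w2 (ψ₂ (w1, w2)) : ℝ))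
        ≤ ∑ _w2 : 𝒲₂, N₂⁻¹ * Real.logb 2 (Fintype.card 𝒵₂) :=
          Finset.sum_le_sum fun w2 _ => hper w2
      _ = N₂ * (N₂⁻¹ * Real.logb 2 (Fintype.card 𝒵₂)) := by
          rw [Finset.sum_const, nsmul_eq_mul, Finset.card_univ, hN₂def]
      _ = Real.logb 2 (Fintype.card 𝒵₂) := by
          rw [← mul_assoc, mul_inv_cancel₀ hN₂.ne', one_mul]
      _ ≤ (n : ℝ) * C₂ := hL₂
  have := add_le_add hS1 hS2
  calc _ ≤ (n : ℝ) * C₁ + (n : ℝ) * C₂ := this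
    _ = (n : ℝ) * (C₁ + C₂) := by ring
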